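/- With notation as in the setup, for all i, j ∈ {1,…,n} one has A^0_{Φ_{{i}}} = A^0_{Φ_{{j}}} in ℂ[Γ]. (All CM types of signature (n−1,1) of the unitary CM field E = kF yield the same class function; this underlies the Yang–Yin proof of the Colmez conjecture in signature (n−1,1).) -/

import Mathlib

open MonoidAlgebra Finset

noncomputable section

/-- `Γ = G × ℤ/2ℤ` (written multiplicatively). -/
abbrev Gam (G : Type*) := G × Multiplicative (ZMod 2)

/-- The element `ρ = (1,1) ∈ Γ` ("complex conjugation"). -/
def rhoEl (G : Type*) [Group G] : Gam G := (1, Multiplicative.ofAdd (1 : ZMod 2))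

/-- Embedding of `g ∈ G` into `ℂ[Γ]` via `g ↦ (g,0)`. -/
def emb {G : Type*} [Group G] (g : G) : MonoidAlgebra ℂ (Gam G) :=
  MonoidAlgebra.of ℂ (Gam G) (g, 1)

/-- `ρ` as an element of `ℂ[Γ]`. -/
def rho (G : Type*) [Group G] : MonoidAlgebra ℂ (Gam G) :=
  MonoidAlgebra.of ℂ (Gam G) (rhoEl G)

/-- `T = Σ_{g ∈ G} g ∈ ℂ[Γ]`. -/
def Tsum (G : Type*) [Group G] [Fintype G] : MonoidAlgebra ℂ (Gam G) :=
  ∑ g : G, emb g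

/-- `Σ_{x ∈ H} a·x·b ∈ ℂ[Γ]`. -/
def cosetSum {G : Type*} [Group G] [Fintype G] (H : Subgroup G) [DecidablePred (· ∈ H)]
    (a b : G) : MonoidAlgebra ℂ (Gam G) :=
  ∑ x : H, emb (a * (x : G) * b)

/-- `Φ_S = T + (ρ-1)·Σ_{i∈S} Σ_{x∈H} σ_i x ∈ ℂ[Γ]`, the CM type attached to `S`. -/
def Phi {G : Type*} [Group G] [Fintype G] (H : Subgroup G) [DecidablePred (· ∈ H)] {n : ℕ}
    (σ : Fin n → G) (S : Finset (Fin n)) : MonoidAlgebra ℂ (Gam G) :=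
  Tsum G + (rho G - 1) * ∑ i ∈ S, cosetSum H (σ i) 1

/-- The ℂ-linear map `ι : ℂ[Γ] → ℂ[Γ]` sending each `γ ∈ Γ` to `γ⁻¹`. -/
def iota (Γ : Type*) [Group Γ] : MonoidAlgebra ℂ Γ →ₗ[ℂ] MonoidAlgebra ℂ Γ :=
  MonoidAlgebra.mapDomainLinearMap ℂ ℂ fun γ : Γ => γ⁻¹

/-- `A_{Φ_S} = (1/(2hn))·Φ_S·ι(Φ_S)`. -/
def Afun {G : Type*} [Group G] [Fintype G] (H : Subgroup G) [DecidablePred (· ∈ H)] {n : ℕ}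
    (σ : Fin n → G) (S : Finset (Fin n)) : MonoidAlgebra ℂ (Gam G) :=
  ((2 * (Nat.card H) * n : ℂ))⁻¹ • (Phi H σ S * iota (Gam G) (Phi H σ S))

/-- `A⁰_{Φ_S} = (1/|Γ|)·Σ_{γ∈Γ} γ·A_{Φ_S}·γ⁻¹`. -/
def A0 {G : Type*} [Group G] [Fintype G] (H : Subgroup G) [DecidablePred (· ∈ H)] {n : ℕ}
    (σ : Fin n → G) (S : Finset (Fin n)) : MonoidAlgebra ℂ (Gam G) :=
  ((Fintype.card (Gam G) : ℂ))⁻¹ •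
    ∑ γ : Gam G, MonoidAlgebra.of ℂ (Gam G) γ * Afun H σ S * MonoidAlgebra.of ℂ (Gam G) γ⁻¹

/-!
Since `ρ` is central and left multiplication by `g ∈ G` fixes `T`, the CM type of `{i}` is a left
translate of a fixed element: `Φ_{{i}} = σ_i · P` with `P = T + (ρ - 1)·Σ_{x∈H} x`. The map `ι` is an
anti-automorphism with `ι(σ_i) = σ_i⁻¹`, so `A_{Φ_{{i}}} = σ_i · A · σ_i⁻¹` for an `A` independent
of `i`, and averaging over conjugation by `Γ` removes the conjugation by `σ_i`.
-/

def conjSum (k Γ : Type*) [Semiring k] [Group Γ] [Fintype Γ] (x : MonoidAlgebra k Γ) :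
    MonoidAlgebra k Γ :=
  ∑ γ : Γ, of k Γ γ * x * of k Γ γ⁻¹

theorem conjSum_of_mul_mul_of_inv {k Γ : Type*} [Semiring k] [Group Γ] [Fintype Γ] (g : Γ)
    (x : MonoidAlgebra k Γ) : conjSum k Γ (of k Γ g * x * of k Γ g⁻¹) = conjSum k Γ x :=
  Fintype.sum_equiv (Equiv.mulRight g) _ _ fun γ => by
    simp only [Equiv.coe_mulRight, mul_inv_rev, map_mul, mul_assoc]

theorem iota_single {Γ : Type*} [Group Γ] (γ : Γ) (c : ℂ) :
    iota Γ (single γ c) = single γ⁻¹ c :=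
  mapDomainLinearMap_single _ _ _

theorem iota_mul {Γ : Type*} [Group Γ] (x y : MonoidAlgebra ℂ Γ) :
    iota Γ (x * y) = iota Γ y * iota Γ x := by
  induction x using MonoidAlgebra.induction_linear with
  | zero => simp
  | add x₁ x₂ h₁ h₂ => simp only [add_mul, mul_add, map_add, h₁, h₂]
  | single g c =>
    induction y using MonoidAlgebra.induction_linear with
    | zero => simp
    | add y₁ y₂ h₁ h₂ => simp only [add_mul, mul_add, map_add, h₁, h₂]
    | single g' c' => simp only [single_mul_single, iota_single, mul_inv_rev, mul_comm c]

section CMType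

variable {G : Type*} [Group G]

theorem emb_mul_emb (a b : G) : emb a * emb b = emb (a * b) := by
  rw [emb, emb, ← map_mul, Prod.mk_mul_mk, one_mul]
  rfl

theorem commute_emb_rho (g : G) : Commute (emb g) (rho G) := by
  refine Commute.map (Prod.ext ?_ ?_) (of ℂ (Gam G)) <;> simp [rhoEl]

theorem iota_emb (g : G) : iota (Gam G) (emb g) = emb g⁻¹ := by
  rw [emb, of_apply, iota_single, Prod.inv_mk, inv_one]
  rfl

variable [Fintype G]

theorem emb_mul_Tsum (g : G) : emb g * Tsum G = Tsum G := by
  rw [Tsum, Finset.mul_sum]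
  simp_rw [emb_mul_emb]
  exact Fintype.sum_equiv (Equiv.mulLeft g) _ _ fun _ => rfl

variable (H : Subgroup G) [DecidablePred (· ∈ H)]

theorem emb_mul_cosetSum (g a b : G) : emb g * cosetSum H a b = cosetSum H (g * a) b := by
  simp only [cosetSum, Finset.mul_sum, emb_mul_emb, mul_assoc]

/-- `Φ_{{i}}` for the coset `σ_i H = H`. -/
def PhiOne : MonoidAlgebra ℂ (Gam G) :=
  Tsum G + (rho G - 1) * cosetSum H 1 1

theorem Phi_singleton {n : ℕ} (σ : Fin n → G) (i : Fin n) :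
    Phi H σ {i} = emb (σ i) * PhiOne H := by
  rw [Phi, Finset.sum_singleton, PhiOne, mul_add, emb_mul_Tsum, ← mul_assoc,
    ((commute_emb_rho (σ i)).sub_right (Commute.one_right _)).eq, mul_assoc,
    emb_mul_cosetSum, mul_one]

theorem Afun_singleton {n : ℕ} (σ : Fin n → G) (i : Fin n) :
    Afun H σ {i} = of ℂ (Gam G) (σ i, 1) *
      ((2 * Nat.card H * n : ℂ)⁻¹ • (PhiOne H * iota (Gam G) (PhiOne H))) *
      of ℂ (Gam G) (σ i, 1)⁻¹ := by
  simp only [Afun, Phi_singleton H σ i, iota_mul, iota_emb, mul_smul_comm, smul_mul_assoc,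
    mul_assoc, Prod.inv_mk, inv_one]
  rfl

theorem A0_eq_smul_conjSum {n : ℕ} (σ : Fin n → G) (S : Finset (Fin n)) :
    A0 H σ S = (Fintype.card (Gam G) : ℂ)⁻¹ • conjSum ℂ (Gam G) (Afun H σ S) :=
  rfl

end CMType

theorem A0_singleton_eq_general {G : Type*} [Group G] [Fintype G] (H : Subgroup G)
    [DecidablePred (· ∈ H)] {n : ℕ} (σ : Fin n → G)
    (i j : Fin n) :
    A0 H σ {i} = A0 H σ {j} := by
  rw [A0_eq_smul_conjSum, A0_eq_smul_conjSum, Afun_singleton, Afun_singleton,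
    conjSum_of_mul_mul_of_inv, conjSum_of_mul_mul_of_inv]

/-- all CM types of signature `(n-1,1)` give the same class function:
`A⁰_{Φ_{{i}}} = A⁰_{Φ_{{j}}}` for all `i, j`. -/
theorem A0_singleton_eq {G : Type*} [Group G] [Fintype G] (H : Subgroup G)
    [DecidablePred (· ∈ H)] {n : ℕ} (σ : Fin n → G)
    (hσ : Function.Bijective fun i : Fin n => (QuotientGroup.mk (σ i) : G ⧸ H))
    (i j : Fin n) :
    A0 H σ {i} = A0 H σ {j} :=
  A0_singleton_eq_general H σ i j

end
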